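/- arXiv:1904.01182 — 7 statements merged into one kernel-verified Lean document; each statement's English description precedes it below -/
import Mathlib

section
/- Let $A$ be a $k \times k$ matrix over a field $\F$ such that every factorization $A = PQ$ (with $P$ a $k \times r$ matrix and $Q$ an $r \times k$ matrix, for any $r$) satisfies $\mathrm{spars}(P) + \mathrm{spars}(Q) \geq s$. Let $B = I_m \otimes A$ be the $mk \times mk$ block-diagonal Kronecker product with the $m \times m$ identity matrix. Then every factorization $B = PQ$ satisfies $\mathrm{spars}(P) + \mathrm{spars}(Q) \geq m \cdot s$. -/
/-!
The diagonal block `(i, i)` of `I_m ⊗ A = P Q` is the product of the `i`-th row block of `P`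
with the `i`-th column block of `Q`, so each of these `m` products is a factorization of `A`
and costs at least `s`. The row blocks of `P` (resp. column blocks of `Q`) partition its
entries, so the sparsities add up to at least `m s`.
-/

open Matrix

noncomputable def spars {k l F : Type*} [Fintype k] [Fintype l] [Zero F]
    (M : Matrix k l F) : ℕ := Set.ncard {p : k × l | M p.1 p.2 ≠ 0}

section Sparsity

variable {ι κ k l F : Type*} [Fintype ι] [Fintype κ] [Fintype k] [Fintype l] [Zero F]

lemma spars_eq_sum_ite [DecidableEq F] (M : Matrix k l F) :
    spars M = ∑ x, ∑ y, if M x y ≠ 0 then 1 else 0 := by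
  rw [spars, Set.ncard_eq_toFinset_card', Set.toFinset_ofPred, Finset.card_filter,
    Fintype.sum_prod_type]

lemma spars_transpose (M : Matrix k l F) : spars Mᵀ = spars M := by
  classical
  rw [spars_eq_sum_ite, spars_eq_sum_ite, Finset.sum_comm]
  rfl

lemma spars_eq_sum_spars_rowBlock (M : Matrix (ι × κ) l F) :
    spars M = ∑ i, spars (M.submatrix (Prod.mk i) id) := by
  classical
  simp only [spars_eq_sum_ite, Fintype.sum_prod_type]
  rfl

lemma spars_eq_sum_spars_colBlock (M : Matrix l (ι × κ) F) :
    spars M = ∑ i, spars (M.submatrix id (Prod.mk i)) := by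
  simp only [← spars_transpose (M.submatrix _ _), transpose_submatrix, ← spars_transpose M,
    spars_eq_sum_spars_rowBlock Mᵀ]

end Sparsity

open scoped Kronecker in
lemma one_kronecker_submatrix_prodMk {ι k F : Type*} [DecidableEq ι] [MulZeroOneClass F]
    (A : Matrix k k F) (i : ι) :
    ((1 : Matrix ι ι F) ⊗ₖ A).submatrix (Prod.mk i) (Prod.mk i) = A := by
  ext x y
  simp [kroneckerMap_apply]

theorem stmt0 {F : Type*} [Field F] (k m s : ℕ) (A : Matrix (Fin k) (Fin k) F)
    (hA : ∀ (r : ℕ) (P : Matrix (Fin k) (Fin r) F) (Q : Matrix (Fin r) (Fin k) F),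
      A = P * Q → s ≤ spars P + spars Q)
    (r : ℕ) (P : Matrix (Fin m × Fin k) (Fin r) F) (Q : Matrix (Fin r) (Fin m × Fin k) F)
    (hB : Matrix.kroneckerMap (· * ·) (1 : Matrix (Fin m) (Fin m) F) A = P * Q) :
    m * s ≤ spars P + spars Q := by
  have hblock : ∀ i : Fin m,
      A = P.submatrix (Prod.mk i) id * Q.submatrix id (Prod.mk i) := fun i => by
    rw [← submatrix_mul _ _ _ _ _ Function.bijective_id, ← hB, one_kronecker_submatrix_prodMk]
  calc m * s = ∑ _i : Fin m, s := by simp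
    _ ≤ ∑ i, (spars (P.submatrix (Prod.mk i) id) + spars (Q.submatrix id (Prod.mk i))) :=
      Finset.sum_le_sum fun i _ => hA r _ _ (hblock i)
    _ = spars P + spars Q := by
      rw [Finset.sum_add_distrib, ← spars_eq_sum_spars_rowBlock, ← spars_eq_sum_spars_colBlock]
end

section
/- For $i \in \{1, \ldots, n\}$, let $\mathbf{v}_i = (1, i, i^2, \ldots, i^{n-1}) \in \mathbb{R}^n$. Then for every $1 \le s \le n$ and every $m \times n$ real matrix $B$ that has a non-zero row with at most $s$ non-zero entries, there exists $i \in \{1, \ldots, s\}$ such that $B \mathbf{v}_i \neq \mathbf{0}$. -/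
open Polynomial

/-- Descartes-type bound: a nonzero real polynomial with at most `k` nonzero
coefficients has fewer than `k` positive real roots. -/
lemma descartes_aux : ∀ k : ℕ, ∀ p : ℝ[X], p ≠ 0 → p.support.card ≤ k →
    ∀ T : Finset ℝ, (∀ x ∈ T, 0 < x) → (∀ x ∈ T, p.eval x = 0) → T.card < k := by
  intro k
  induction k with
  | zero =>
    intro p hp hsupp T _ _
    exact absurd (Polynomial.support_eq_empty.1 (Finset.card_eq_zero.1 (Nat.le_zero.1 hsupp))) hp
  | succ k ih =>
    intro p hp hsupp T hpos hroot
    rcases T.eq_empty_or_nonempty with rfl | ⟨x₀, hx₀⟩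
    · simp
    set d := p.rootMultiplicity 0 with hd
    set q := p /ₘ (X - C (0:ℝ)) ^ d with hqdef
    have hpq : (X - C (0:ℝ)) ^ d * q = p := pow_mul_divByMonic_rootMultiplicity_eq p 0
    have hq0 : q.eval 0 ≠ 0 := eval_divByMonic_pow_rootMultiplicity_ne_zero 0 hp
    have hXq : X ^ d * q = p := by simpa using hpq
    have hqne : q ≠ 0 := by
      intro h0
      rw [h0, mul_zero] at hXq
      exact hp hXq.symm
    have hqroot : ∀ x ∈ T, q.eval x = 0 := by
      intro x hx
      have h1 := hroot x hx
      rw [← hXq, eval_mul, eval_pow, eval_X] at h1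
      exact (mul_eq_zero.1 h1).resolve_left (pow_ne_zero _ (hpos x hx).ne')
    have hsuppq : q.support.card = p.support.card := by
      have himg : p.support = q.support.image (· + d) := by
        ext u
        simp only [Finset.mem_image, mem_support_iff, ← hXq, mul_comm (X ^ d : ℝ[X]) q,
          coeff_mul_X_pow']
        constructor
        · intro hu
          by_cases hdu : d ≤ u
          · exact ⟨u - d, by simpa [hdu] using hu, Nat.sub_add_cancel hdu⟩
          · simp [hdu] at hu
        · rintro ⟨v, hv, rfl⟩
          simpa using hv
      rw [himg, Finset.card_image_of_injective _ (add_left_injective d)]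
    have h0supp : (0:ℕ) ∈ q.support := by
      rw [mem_support_iff, coeff_zero_eq_eval_zero]
      exact hq0
    have hq' : derivative q ≠ 0 := by
      intro h
      have hC := eq_C_of_derivative_eq_zero h
      have := hqroot x₀ hx₀
      rw [hC] at this
      simp only [eval_C] at this
      rw [← coeff_zero_eq_eval_zero] at hq0
      exact hq0 this
    have hsupp' : (derivative q).support.card ≤ k := by
      have himg : (derivative q).support.image (· + 1) ⊆ q.support.erase 0 := by
        intro u hu
        rcases Finset.mem_image.1 hu with ⟨v, hv, rfl⟩
        rw [Polynomial.mem_support_derivative] at hv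
        exact Finset.mem_erase.2 ⟨Nat.succ_ne_zero v, hv⟩
      have h1 : (derivative q).support.card ≤ (q.support.erase 0).card := by
        rw [← Finset.card_image_of_injective _ (add_left_injective 1)]
        exact Finset.card_le_card himg
      have h2 := Finset.card_erase_of_mem h0supp
      have h3 : q.support.card ≤ k + 1 := hsuppq ▸ hsupp
      omega
    set S := (derivative q).roots.toFinset.filter (fun z => 0 < z) with hS
    have hScard : S.card < k := by
      refine ih _ hq' hsupp' S (fun z hz => (Finset.mem_filter.1 hz).2) ?_
      intro z hz
      have := (Finset.mem_filter.1 hz).1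
      rw [Multiset.mem_toFinset, mem_roots hq'] at this
      exact this
    have hTS : T.card ≤ (S \ T).card + 1 := by
      refine Finset.card_le_diff_of_interleaved ?_
      intro x hx y hy hxy _
      obtain ⟨z, hz1, hz2⟩ := exists_deriv_eq_zero hxy q.continuousOn
        ((hqroot x hx).trans (hqroot y hy).symm)
      refine ⟨z, ?_, hz1.1, hz1.2⟩
      rw [hS, Finset.mem_filter, Multiset.mem_toFinset, mem_roots hq']
      exact ⟨by rwa [IsRoot, ← q.deriv], (hpos x hx).trans hz1.1⟩
    have : T.card ≤ S.card + 1 :=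
      hTS.trans (Nat.add_le_add_right (Finset.card_le_card Finset.sdiff_subset) 1)
    omega

theorem stmt2 (n s m : ℕ) (hs1 : 1 ≤ s) (hsn : s ≤ n)
    (B : Matrix (Fin m) (Fin n) ℝ)
    (hrow : ∃ r : Fin m, B r ≠ 0 ∧ Set.ncard {j : Fin n | B r j ≠ 0} ≤ s) :
    ∃ i : Fin n, (i : ℕ) < s ∧
      B.mulVec (fun j => ((i : ℕ) + 1 : ℝ) ^ (j : ℕ)) ≠ 0 := by
  obtain ⟨r, hr, hcard⟩ := hrow
  by_contra hcon
  push_neg at hcon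
  set p : ℝ[X] := ∑ j : Fin n, C (B r j) * X ^ (j : ℕ) with hp
  have hcoeff : ∀ j : Fin n, p.coeff (j : ℕ) = B r j := by
    intro j
    rw [hp, finset_sum_coeff]
    rw [Finset.sum_eq_single j]
    · simp
    · intro b _ hbj
      simp [coeff_C_mul, coeff_X_pow, Fin.val_eq_val, Ne.symm hbj]
    · simp
  have hpne : p ≠ 0 := by
    have : ∃ j, B r j ≠ 0 := by
      by_contra hall
      push_neg at hall
      exact hr (funext hall)
    obtain ⟨j, hj⟩ := this
    intro h0
    have h1 := hcoeff j
    rw [h0, coeff_zero] at h1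
    exact hj h1.symm
  have hsupp : p.support.card ≤ s := by
    have hsub : p.support ⊆ (Finset.univ.filter fun j : Fin n => B r j ≠ 0).image
        (fun j : Fin n => (j : ℕ)) := by
      intro u hu
      rw [mem_support_iff, hp, finset_sum_coeff] at hu
      obtain ⟨j, -, hj⟩ := Finset.exists_ne_zero_of_sum_ne_zero hu
      simp only [coeff_C_mul, coeff_X_pow, mul_ite, mul_one, mul_zero, ne_eq, ite_eq_right_iff,
        not_forall] at hj
      obtain ⟨hju, hBj⟩ := hj
      exact Finset.mem_image.2 ⟨j, Finset.mem_filter.2 ⟨Finset.mem_univ _, hBj⟩, hju.symm⟩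
    calc p.support.card ≤ _ := Finset.card_le_card hsub
      _ ≤ (Finset.univ.filter fun j : Fin n => B r j ≠ 0).card := Finset.card_image_le
      _ ≤ s := by
        have hco : ((Finset.univ.filter fun j : Fin n => B r j ≠ 0) : Set (Fin n))
            = {j : Fin n | B r j ≠ 0} := by ext j; simp
        rw [← Set.ncard_coe_finset, hco]
        exact hcard
  set T : Finset ℝ := (Finset.range s).image (fun i : ℕ => (i : ℝ) + 1) with hT
  have hTcard : T.card = s := by
    have hinj : Function.Injective (fun i : ℕ => (i : ℝ) + 1) := by
      intro a b hab
      simpa using hab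
    rw [hT, Finset.card_image_of_injective _ hinj, Finset.card_range]
  have hTpos : ∀ x ∈ T, 0 < x := by
    intro x hx
    rcases Finset.mem_image.1 hx with ⟨i, -, rfl⟩
    positivity
  have hTroot : ∀ x ∈ T, p.eval x = 0 := by
    intro x hx
    rcases Finset.mem_image.1 hx with ⟨i, hi, rfl⟩
    rw [Finset.mem_range] at hi
    set i' : Fin n := ⟨i, lt_of_lt_of_le hi hsn⟩ with hi'
    have h0 := hcon i' (by simpa [hi'] using hi)
    have h0r := congrFun h0 r
    simp only [Matrix.mulVec, dotProduct, Pi.zero_apply] at h0r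
    rw [hp]
    rw [Polynomial.eval_finset_sum]
    simp only [eval_mul, eval_C, eval_pow, eval_X]
    simpa [hi'] using h0r
  have := descartes_aux s p hpne hsupp T hTpos hTroot
  omega
end

section
/- There exists a real positive semidefinite $n \times n$ matrix $M$ (namely $M = \tilde{M}^T\tilde{M}$ with $\tilde{M}$ as constructed from the Vandermonde vectors) such that for every $m \times n$ real matrix $B$ with fewer than $n^2/4$ non-zero entries, $M \neq B^T B$. -/
/-!
Write `n = 2h`, let `P = (X - 1)(X - 2) ⋯ (X - h)` and let `A` be the `h × 2h` matrix whose rows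
are the coefficient vectors of `P, X P, …, X^(h-1) P`. Then `M = AᵀA` is positive semidefinite of
rank `h`, and `A` kills the vectors `vᵢ = (1, i, …, i^(2h-1))` for `1 ≤ i ≤ h`. If `M = BᵀB`, then
`B` also has rank `h` and kills every `vᵢ`. A nonzero row of `B` is therefore the coefficient vector
of a nonzero polynomial with the `h` positive roots `1, …, h`, so by Descartes' rule of signs it has
more than `h` nonzero entries. As at least `h` rows of `B` are nonzero, `B` has at least `h²`
nonzero entries.
-/

open Polynomial Finset Matrix

def powerVec {R : Type*} [Monoid R] (n : ℕ) (x : R) : Fin n → R := fun k => x ^ (k : ℕ)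

namespace Polynomial

variable {R : Type*}

theorem signVariations_lt_card_support [Semiring R] [LinearOrder R] {p : R[X]} (hp : p ≠ 0) :
    p.signVariations < #p.support := by
  by_cases hlead : p.eraseLead = 0
  · have hmono : monomial p.natDegree p.leadingCoeff = p := by
      simpa [hlead] using p.eraseLead_add_monomial_natDegree_leadingCoeff
    rw [← hmono, signVariations_monomial, hmono]
    exact card_pos.mpr (support_nonempty.mpr hp)
  · calc p.signVariations ≤ p.eraseLead.signVariations + 1 := signVariations_le_eraseLead_succ p
      _ < #p.eraseLead.support + 1 := by gcongr; exact signVariations_lt_card_support hlead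
      _ = #p.support := card_support_eraseLead_add_one hp
termination_by #p.support
decreasing_by exact eraseLead_support_card_lt hp

theorem card_le_roots_countP_pos [CommRing R] [IsDomain R] [LinearOrder R] {p : R[X]}
    (hp : p ≠ 0) {S : Finset R} (hpos : ∀ x ∈ S, 0 < x) (hroot : ∀ x ∈ S, p.IsRoot x) :
    #S ≤ p.roots.countP (0 < ·) := by
  rw [Multiset.countP_eq_card_filter, ← Finset.card_val]
  refine Multiset.card_le_card ((Multiset.le_iff_subset S.nodup).mpr fun x hx => ?_)
  exact Multiset.mem_filter.mpr ⟨(mem_roots hp).mpr (hroot x hx), hpos x hx⟩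

theorem card_pos_roots_lt_card_support [CommRing R] [LinearOrder R] [IsStrictOrderedRing R]
    {p : R[X]} (hp : p ≠ 0) {S : Finset R} (hpos : ∀ x ∈ S, 0 < x)
    (hroot : ∀ x ∈ S, p.IsRoot x) : #S < #p.support :=
  (card_le_roots_countP_pos hp hpos hroot).trans_lt
    ((roots_countP_pos_le_signVariations p).trans_lt (signVariations_lt_card_support hp))

variable {n : ℕ}

theorem support_ofFn [Semiring R] [DecidableEq R] (v : Fin n → R) :
    (ofFn n v).support = ({k | v k ≠ 0} : Finset (Fin n)).map Fin.valEmbedding := by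
  ext d
  rw [mem_support_iff, Finset.mem_map]
  rcases lt_or_ge d n with hd | hd
  · simp only [ofFn_coeff_eq_val_of_lt v hd, mem_filter, mem_univ, true_and,
      Fin.valEmbedding_apply]
    exact ⟨fun h => ⟨_, h, rfl⟩, by rintro ⟨k, hk, rfl⟩; exact hk⟩
  · simp only [ofFn_coeff_eq_zero_of_ge v hd, ne_eq, not_true_eq_false, false_iff, not_exists,
      Fin.valEmbedding_apply]
    omega

theorem eval_ofFn [CommSemiring R] [DecidableEq R] (v : Fin n → R) (x : R) :
    (ofFn n v).eval x = v ⬝ᵥ powerVec n x := by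
  simp [ofFn_eq_sum_monomial, eval_finsetSum, dotProduct, powerVec]

theorem eval_eq_toFn_dotProduct_powerVec [CommSemiring R] {p : R[X]} (hp : p.natDegree < n)
    (x : R) : p.eval x = toFn n p ⬝ᵥ powerVec n x := by
  rw [eval_eq_sum_range' hp, ← Fin.sum_univ_eq_sum_range]
  rfl

noncomputable def shiftsMatrix [Semiring R] (p : R[X]) (h n : ℕ) : Matrix (Fin h) (Fin n) R :=
  Matrix.of fun j => toFn n (X ^ (j : ℕ) * p)

theorem shiftsMatrix_mulVec_powerVec [CommSemiring R] (p : R[X]) {h : ℕ}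
    (hn : p.natDegree + h ≤ n) (x : R) :
    p.shiftsMatrix h n *ᵥ powerVec n x = fun j : Fin h => x ^ (j : ℕ) * p.eval x := by
  ext j
  have hdeg : (X ^ (j : ℕ) * p).natDegree < n :=
    calc _ ≤ (X ^ (j : ℕ) : R[X]).natDegree + p.natDegree := natDegree_mul_le
      _ ≤ j + p.natDegree := by gcongr; exact natDegree_X_pow_le _
      _ < n := by omega
  rw [show (p.shiftsMatrix h n *ᵥ powerVec n x) j =
      toFn n (X ^ (j : ℕ) * p) ⬝ᵥ powerVec n x from rfl,
    ← eval_eq_toFn_dotProduct_powerVec hdeg, eval_mul, eval_X_pow]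

theorem Monic.le_rank_shiftsMatrix [CommRing R] [StrongRankCondition R] {p : R[X]}
    (hp : p.Monic) (h : ℕ) : h ≤ (p.shiftsMatrix h (p.natDegree + h)).rank := by
  set d := p.natDegree
  -- the last `h` columns form a lower unitriangular block
  set T := (p.shiftsMatrix h (d + h)).submatrix id (Fin.natAdd d)
  have hT : ∀ j j' : Fin h, j ≤ j' → T j j' = p.coeff (d + j' - j) := by
    intro j j' hjj'
    rw [show T j j' = (X ^ (j : ℕ) * p).coeff (d + j') from rfl, coeff_X_pow_mul',
      if_pos (by rw [Fin.le_def] at hjj'; omega)]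
  have hlower : T.IsLowerTriangular := by
    intro j j' hjj'
    rw [OrderDual.toDual_lt_toDual] at hjj'
    rw [hT j j' hjj'.le]
    exact coeff_eq_zero_of_natDegree_lt (by rw [Fin.lt_def] at hjj'; omega)
  have hdet : T.det = 1 := by
    rw [det_of_isLowerTriangular T hlower]
    refine prod_eq_one fun j _ => ?_
    rw [hT j j le_rfl, show d + (j : ℕ) - j = d by omega]
    exact hp
  calc h = T.rank := by
        rw [rank_of_isUnit T ((isUnit_iff_isUnit_det T).mpr (hdet ▸ isUnit_one)), Fintype.card_fin]
    _ ≤ _ := rank_submatrix_le _ _ _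

end Polynomial

theorem card_lt_card_ne_zero_of_dotProduct_powerVec_eq_zero {R : Type*} [CommRing R]
    [LinearOrder R] [IsStrictOrderedRing R] {n : ℕ} {v : Fin n → R} (hv : v ≠ 0) {S : Finset R}
    (hpos : ∀ x ∈ S, 0 < x) (hvS : ∀ x ∈ S, v ⬝ᵥ powerVec n x = 0) : #S < #{k | v k ≠ 0} := by
  classical
  have hp : ofFn n v ≠ 0 := fun h => hv (injective_ofFn n (h.trans (ofFn_zero n).symm))
  have := card_pos_roots_lt_card_support hp hpos fun x hx => by
    rw [IsRoot, eval_ofFn, hvS x hx]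
  rwa [support_ofFn, card_map] at this

namespace Matrix

variable {l m n R : Type*} [Fintype m] [Fintype n]

theorem rank_le_card_ne_zero_rows [Field R] [DecidableEq R] (B : Matrix m n R) :
    B.rank ≤ #{i | B.row i ≠ 0} := by
  have hspan : Submodule.span R (Set.range B.row) ≤
      Submodule.span R (({i | B.row i ≠ 0} : Finset m).image B.row : Set (n → R)) := by
    refine Submodule.span_le.mpr ?_
    rintro _ ⟨i, rfl⟩
    by_cases hi : B.row i = 0
    · rw [SetLike.mem_coe, hi]
      exact zero_mem _
    · exact Submodule.subset_span (mem_image_of_mem _ (mem_filter.mpr ⟨mem_univ i, hi⟩))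
  rw [rank_eq_finrank_span_row]
  calc _ ≤ _ := Submodule.finrank_mono hspan
    _ ≤ _ := finrank_span_finset_le_card _
    _ ≤ _ := card_image_le

theorem ncard_ne_zero_eq_sum [Zero R] [DecidableEq R] (B : Matrix m n R) :
    {p : m × n | B p.1 p.2 ≠ 0}.ncard = ∑ i, #{k | B i k ≠ 0} := by
  rw [← coe_filter_univ, Set.ncard_coe_finset, card_filter, Fintype.sum_prod_type]
  simp only [card_filter]

theorem rank_mul_le_ncard_ne_zero [Field R] [DecidableEq R] (B : Matrix m n R) {s : ℕ}
    (hs : ∀ i, B.row i ≠ 0 → s ≤ #{k | B i k ≠ 0}) :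
    B.rank * s ≤ {p : m × n | B p.1 p.2 ≠ 0}.ncard := by
  rw [ncard_ne_zero_eq_sum]
  calc B.rank * s ≤ #{i | B.row i ≠ 0} * s :=
        Nat.mul_le_mul_right s B.rank_le_card_ne_zero_rows
    _ = ∑ i with B.row i ≠ 0, s := by rw [sum_const, smul_eq_mul]
    _ ≤ ∑ i with B.row i ≠ 0, #{k | B i k ≠ 0} :=
        sum_le_sum fun i hi => hs i (mem_filter.mp hi).2
    _ ≤ ∑ i, #{k | B i k ≠ 0} := sum_le_sum_of_subset (subset_univ _)

theorem mulVec_eq_zero_of_transpose_mul_self_eq [Fintype l] [Field R] [LinearOrder R]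
    [IsStrictOrderedRing R] {A : Matrix l n R} {B : Matrix m n R} (hAB : Aᵀ * A = Bᵀ * B)
    {v : n → R} (hv : A *ᵥ v = 0) : B *ᵥ v = 0 := by
  have : v ∈ LinearMap.ker (Aᵀ * A).mulVecLin := by
    rw [ker_mulVecLin_transpose_mul_self]
    exact hv
  rwa [hAB, ker_mulVecLin_transpose_mul_self] at this

theorem sq_card_le_ncard_ne_zero_of_transpose_mul_self_eq [Fintype l] [Field R] [LinearOrder R]
    [IsStrictOrderedRing R] {d : ℕ} {A : Matrix l (Fin d) R} {B : Matrix m (Fin d) R}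
    (hAB : Aᵀ * A = Bᵀ * B) {S : Finset R} (hpos : ∀ x ∈ S, 0 < x)
    (hAS : ∀ x ∈ S, A *ᵥ powerVec d x = 0) (hrank : #S ≤ A.rank) :
    #S ^ 2 ≤ {p : m × Fin d | B p.1 p.2 ≠ 0}.ncard := by
  have hrankB : #S ≤ B.rank := by
    rwa [← rank_transpose_mul_self B, ← hAB, rank_transpose_mul_self]
  have hrow : ∀ i, B.row i ≠ 0 → #S ≤ #{k | B i k ≠ 0} := fun i hi =>
    (card_lt_card_ne_zero_of_dotProduct_powerVec_eq_zero hi hpos fun x hx =>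
      congr_fun (mulVec_eq_zero_of_transpose_mul_self_eq hAB (hAS x hx)) i).le
  calc #S ^ 2 ≤ B.rank * #S := by rw [sq]; gcongr
    _ ≤ _ := B.rank_mul_le_ncard_ne_zero hrow

end Matrix

theorem stmt7 (n : ℕ) (hn : Even n) :
    ∃ M : Matrix (Fin n) (Fin n) ℝ, M.PosSemidef ∧
      ∀ (m : ℕ) (B : Matrix (Fin m) (Fin n) ℝ),
        4 * Set.ncard {p : Fin m × Fin n | B p.1 p.2 ≠ 0} < n ^ 2 →
        M ≠ Bᵀ * B := by
  obtain ⟨h, rfl⟩ := hn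
  set S : Finset ℝ := (Icc 1 h).map Nat.castEmbedding
  have hS : #S = h := by simp [S]
  have hpos : ∀ x ∈ S, 0 < x := fun x hx => by
    obtain ⟨k, hk, rfl⟩ := mem_map.mp hx
    exact Nat.cast_pos.mpr (mem_Icc.mp hk).1
  set P : ℝ[X] := ∏ x ∈ S, (X - C x)
  have hP : P.Monic := monic_prod_of_monic _ _ fun x _ => monic_X_sub_C x
  have hdeg : P.natDegree = h := by
    rw [natDegree_prod_of_monic _ _ fun x _ => monic_X_sub_C x]
    simp [S]
  set A := P.shiftsMatrix h (h + h)
  have hAS : ∀ x ∈ S, A *ᵥ powerVec (h + h) x = 0 := fun x hx => by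
    rw [shiftsMatrix_mulVec_powerVec P (by omega), eval_prod, prod_eq_zero hx (by simp)]
    exact funext fun _ => mul_zero _
  have hrank : #S ≤ A.rank := by
    have := hP.le_rank_shiftsMatrix h
    rw [hdeg] at this
    exact hS.trans_le this
  refine ⟨Aᵀ * A, by simpa using posSemidef_conjTranspose_mul_self A, fun m B hsparse hAB => ?_⟩
  have hdense := sq_card_le_ncard_ne_zero_of_transpose_mul_self_eq hAB hpos hAS hrank
  rw [hS] at hdense
  nlinarith
end

section
/- Let $A$ be an $n \times n$ matrix over a field that can be written as $A = BC$ with $B \in \F^{n\times m}$, $C \in \F^{m \times n}$ and $\mathrm{spars}(B) + \mathrm{spars}(C) \le n^{1+\varepsilon}$ (with $m \le n^{1+\varepsilon}$). Then for every $\delta > 0$, $A$ can be written as $A = R + S$ where $\mathrm{rank}(R) \le 2\delta n$ and $\mathrm{spars}(S) \le n^{1+3\varepsilon}/\delta^2$. -/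
open Finset

set_option maxHeartbeats 1000000 in
theorem stmt9 {F : Type*} [Field F] (n m : ℕ) (ε δ : ℝ) (hδ : 0 < δ)
    (A : Matrix (Fin n) (Fin n) F) (B : Matrix (Fin n) (Fin m) F)
    (C : Matrix (Fin m) (Fin n) F)
    (hm : (m : ℝ) ≤ (n : ℝ) ^ ((1 : ℝ) + ε))
    (hA : A = B * C)
    (hsp : ((Set.ncard {p : Fin n × Fin m | B p.1 p.2 ≠ 0}
        + Set.ncard {p : Fin m × Fin n | C p.1 p.2 ≠ 0} : ℕ) : ℝ)
        ≤ (n : ℝ) ^ ((1 : ℝ) + ε)) :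
    ∃ R S : Matrix (Fin n) (Fin n) F, A = R + S ∧
      (R.rank : ℝ) ≤ 2 * δ * n ∧
      ((Set.ncard {p : Fin n × Fin n | S p.1 p.2 ≠ 0} : ℕ) : ℝ)
        ≤ (n : ℝ) ^ ((1 : ℝ) + 3 * ε) / δ ^ 2 := by
  classical
  rcases Nat.eq_zero_or_pos n with hn | hn
  · subst hn
    refine ⟨A, 0, (add_zero A).symm, ?_, ?_⟩
    · have h1 := Matrix.rank_le_card_width A
      simp at h1
      simp [h1]
    · have h2 : {p : Fin 0 × Fin 0 | (0 : Matrix (Fin 0) (Fin 0) F) p.1 p.2 ≠ 0} = ∅ := by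
        ext p; exact p.1.elim0
      rw [h2]
      simp
      positivity
  · have hn0 : (0 : ℝ) < n := by exact_mod_cast hn
    set t : ℝ := (n : ℝ) ^ (ε : ℝ) / δ with ht
    have hne : (0 : ℝ) < (n : ℝ) ^ (ε : ℝ) := Real.rpow_pos_of_pos hn0 ε
    have ht0 : 0 < t := div_pos hne hδ
    set bc : Fin m → ℕ := fun i => (univ.filter fun j : Fin n => B j i ≠ 0).card with hbc
    set cc : Fin m → ℕ := fun i => (univ.filter fun k : Fin n => C i k ≠ 0).card with hcc
    set D : Finset (Fin m) := univ.filter (fun i => t < bc i ∨ t < cc i) with hD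
    -- total sparsity
    have eB : {p : Fin n × Fin m | B p.1 p.2 ≠ 0}.ncard
        = (univ.filter fun p : Fin n × Fin m => B p.1 p.2 ≠ 0).card := by
      rw [← Set.ncard_coe_finset]; congr 1; ext p; simp
    have eC : {p : Fin m × Fin n | C p.1 p.2 ≠ 0}.ncard
        = (univ.filter fun p : Fin m × Fin n => C p.1 p.2 ≠ 0).card := by
      rw [← Set.ncard_coe_finset]; congr 1; ext p; simp
    have eB2 : (univ.filter fun p : Fin n × Fin m => B p.1 p.2 ≠ 0).card = ∑ i, bc i := by
      rw [Finset.card_filter, Fintype.sum_prod_type, Finset.sum_comm]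
      simp [hbc, Finset.card_filter]
    have eC2 : (univ.filter fun p : Fin m × Fin n => C p.1 p.2 ≠ 0).card = ∑ i, cc i := by
      rw [Finset.card_filter, Fintype.sum_prod_type]
      simp [hcc, Finset.card_filter]
    have htot : ((∑ i, bc i : ℕ) : ℝ) + ((∑ i, cc i : ℕ) : ℝ) ≤ (n : ℝ) ^ ((1 : ℝ) + ε) := by
      rw [eB, eC, eB2, eC2] at hsp
      push_cast at hsp ⊢
      linarith
    -- bound on D.card
    have hDle : (D.card : ℝ) * t ≤ (n : ℝ) ^ ((1 : ℝ) + ε) := by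
      have h1 : ∀ i ∈ D, t ≤ (bc i : ℝ) + (cc i : ℝ) := by
        intro i hi
        rw [hD, Finset.mem_filter] at hi
        rcases hi.2 with h | h
        · exact le_trans h.le (le_add_of_nonneg_right (by positivity))
        · exact le_trans h.le (le_add_of_nonneg_left (by positivity))
      calc (D.card : ℝ) * t = ∑ _i ∈ D, t := by rw [Finset.sum_const, nsmul_eq_mul]
        _ ≤ ∑ i ∈ D, ((bc i : ℝ) + (cc i : ℝ)) := Finset.sum_le_sum h1
        _ ≤ ∑ i : Fin m, ((bc i : ℝ) + (cc i : ℝ)) :=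
            Finset.sum_le_sum_of_subset_of_nonneg (Finset.subset_univ D)
              (fun i _ _ => by positivity)
        _ = ((∑ i, bc i : ℕ) : ℝ) + ((∑ i, cc i : ℕ) : ℝ) := by
            push_cast; rw [Finset.sum_add_distrib]
        _ ≤ _ := htot
    have hrpow1 : (n : ℝ) ^ ((1 : ℝ) + ε) = (n : ℝ) * (n : ℝ) ^ (ε : ℝ) := by
      rw [Real.rpow_add hn0, Real.rpow_one]
    have hDcard : (D.card : ℝ) ≤ δ * n := by
      have key : (δ * n) * t = (n : ℝ) * (n : ℝ) ^ (ε : ℝ) := by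
        rw [ht]; field_simp
      rw [hrpow1, ← key] at hDle
      exact le_of_mul_le_mul_right hDle ht0
    -- define R and S
    set R : Matrix (Fin n) (Fin n) F :=
      (Matrix.of fun j (i : D) => B j i) * (Matrix.of fun (i : D) k => C i k) with hR
    set S : Matrix (Fin n) (Fin n) F :=
      Matrix.of fun j k => ∑ i ∈ Dᶜ, B j i * C i k with hS
    refine ⟨R, S, ?_, ?_, ?_⟩
    · rw [hA]; ext j k
      rw [Matrix.add_apply, hR, hS]
      simp only [Matrix.mul_apply, Matrix.of_apply]
      rw [← Finset.sum_add_sum_compl D (fun i => B j i * C i k)]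
      congr 1
      exact (Finset.sum_attach D _).symm
    · have h1 : R.rank ≤ D.card := by
        refine le_trans (Matrix.rank_mul_le_left _ _) ?_
        refine le_trans (Matrix.rank_le_card_width _) ?_
        simp [Fintype.card_coe]
      have h2 : (R.rank : ℝ) ≤ (D.card : ℝ) := by exact_mod_cast h1
      have hδn : 0 ≤ δ * n := by positivity
      linarith
    · -- sparsity of S
      have hset : {p : Fin n × Fin n | S p.1 p.2 ≠ 0}.ncard
          = (univ.filter fun p : Fin n × Fin n => S p.1 p.2 ≠ 0).card := by
        rw [← Set.ncard_coe_finset]; congr 1; ext p; simp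
      have hsub : (univ.filter fun p : Fin n × Fin n => S p.1 p.2 ≠ 0) ⊆
          Dᶜ.biUnion (fun i => (univ.filter fun j : Fin n => B j i ≠ 0) ×ˢ
            (univ.filter fun k : Fin n => C i k ≠ 0)) := by
        intro p hp
        rw [Finset.mem_filter] at hp
        have hp2 : ∑ i ∈ Dᶜ, B p.1 i * C i p.2 ≠ 0 := hp.2
        obtain ⟨i, hi, hne2⟩ := Finset.exists_ne_zero_of_sum_ne_zero hp2
        rw [Finset.mem_biUnion]
        exact ⟨i, hi, by
          rw [Finset.mem_product, Finset.mem_filter, Finset.mem_filter]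
          exact ⟨⟨Finset.mem_univ _, left_ne_zero_of_mul hne2⟩,
            ⟨Finset.mem_univ _, right_ne_zero_of_mul hne2⟩⟩⟩
      have hcard : (univ.filter fun p : Fin n × Fin n => S p.1 p.2 ≠ 0).card
          ≤ ∑ i ∈ Dᶜ, bc i * cc i := by
        refine le_trans (Finset.card_le_card hsub) ?_
        refine le_trans (Finset.card_biUnion_le) ?_
        refine Finset.sum_le_sum fun i _ => ?_
        rw [Finset.card_product]
      have hsmall : ∀ i ∈ Dᶜ, ((bc i * cc i : ℕ) : ℝ) ≤ t * t := by
        intro i hi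
        rw [Finset.mem_compl, hD, Finset.mem_filter] at hi
        push_neg at hi
        have h1 : (bc i : ℝ) ≤ t := (hi (Finset.mem_univ _)).1
        have h2 : (cc i : ℝ) ≤ t := (hi (Finset.mem_univ _)).2
        push_cast
        exact mul_le_mul h1 h2 (Nat.cast_nonneg _) ht0.le
      have hfinal : ((∑ i ∈ Dᶜ, bc i * cc i : ℕ) : ℝ) ≤ (m : ℝ) * (t * t) := by
        push_cast
        calc ∑ i ∈ Dᶜ, ((bc i : ℝ) * (cc i : ℝ))
            ≤ ∑ _i ∈ Dᶜ, (t * t) := Finset.sum_le_sum (fun i hi => by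
              have := hsmall i hi; push_cast at this; exact this)
          _ = (Dᶜ.card : ℝ) * (t * t) := by rw [Finset.sum_const, nsmul_eq_mul]
          _ ≤ (m : ℝ) * (t * t) := by
              have : (Dᶜ.card : ℝ) ≤ (m : ℝ) := by
                have h := (Finset.card_le_univ Dᶜ).trans_eq
                  (Finset.card_univ.trans (Fintype.card_fin m))
                exact_mod_cast h
              nlinarith [mul_pos ht0 ht0]
      have hrhs : (m : ℝ) * (t * t) ≤ (n : ℝ) ^ ((1 : ℝ) + 3 * ε) / δ ^ 2 := by
        have htt : t * t = (n : ℝ) ^ ((2 : ℝ) * ε) / δ ^ 2 := by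
          rw [ht, div_mul_div_comm, ← Real.rpow_add hn0]
          ring_nf
        have hpow : (n : ℝ) ^ ((1 : ℝ) + ε) * (n : ℝ) ^ ((2 : ℝ) * ε)
            = (n : ℝ) ^ ((1 : ℝ) + 3 * ε) := by
          rw [← Real.rpow_add hn0]; ring_nf
        rw [htt, ← hpow]
        rw [mul_div_assoc']
        apply div_le_div_of_nonneg_right ?_ (by positivity)
        · exact mul_le_mul_of_nonneg_right hm (Real.rpow_nonneg hn0.le _)
      rw [hset]
      calc ((univ.filter fun p : Fin n × Fin n => S p.1 p.2 ≠ 0).card : ℝ)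
          ≤ ((∑ i ∈ Dᶜ, bc i * cc i : ℕ) : ℝ) := by exact_mod_cast hcard
        _ ≤ (m : ℝ) * (t * t) := hfinal
        _ ≤ _ := hrhs
end

section
/- For every positive integers $n$ and $t$, there exists a set $S \subseteq \mathbb{N}$ of size $n^2$ with all elements at most $n^{O(t)}$ such that all sums of $t$ distinct elements of $S$ are distinct, i.e., $|tS| = \binom{n^2}{t}$ where $tS = \{a_1 + \cdots + a_t : a_i \in S \text{ distinct}\}$. -/
/-!
Build the set greedily. Call `S` *`t`-Sidon* if distinct subsets of `S` with at most `t` elements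
have distinct sums. A new element `x` keeps this property unless `x + ∑ A = ∑ B` for some subsets
`A`, `B` of `S` with at most `t` elements; there are at most `(|S| + 1) ^ t` such subsets, so at
most `(|S| + 1) ^ (2t)` values of `x` are forbidden and one of them lies in `[0, (|S| + 1) ^ (2t)]`.
After `n²` steps all elements are at most `(n²) ^ (2t) = n ^ (4t)`.
-/

open Finset

namespace Finset

variable {α : Type*} [DecidableEq α]

theorem card_filter_powerset_card_le_le (s : Finset α) (t : ℕ) :
    #(s.powerset.filter (#· ≤ t)) ≤ (#s + 1) ^ t := by
  induction t with
  | zero => exact card_le_one.mpr fun A hA B hB => by simp_all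
  | succ t ih =>
    set P := s.powerset.filter (#· ≤ t)
    have hcover : s.powerset.filter (#· ≤ t + 1) ⊆
        P ∪ (P ×ˢ s).image fun p => insert p.2 p.1 := by
      intro A hA
      simp only [mem_filter, mem_powerset] at hA
      obtain ⟨hAs, hAt⟩ := hA
      by_cases hAt' : #A ≤ t
      · exact mem_union_left _ (mem_filter.mpr ⟨mem_powerset.mpr hAs, hAt'⟩)
      · obtain ⟨a, ha⟩ : A.Nonempty := card_pos.mp (by omega)
        refine mem_union_right _ (mem_image.mpr ⟨(A.erase a, a), ?_, insert_erase ha⟩)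
        have hAa : #(A.erase a) ≤ t := by rw [card_erase_of_mem ha]; omega
        exact mem_product.mpr
          ⟨mem_filter.mpr ⟨mem_powerset.mpr ((erase_subset a A).trans hAs), hAa⟩, hAs ha⟩
    calc #(s.powerset.filter (#· ≤ t + 1))
        ≤ #P + #P * #s := (card_le_card hcover).trans <|
          (card_union_le _ _).trans (by grw [card_image_le, card_product])
      _ = #P * (#s + 1) := by ring
      _ ≤ (#s + 1) ^ (t + 1) := by rw [pow_succ]; gcongr

end Finset

def IsSidonUpTo {α : Type*} [AddCommMonoid α] (t : ℕ) (S : Finset α) : Prop :=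
  ∀ T ⊆ S, ∀ T' ⊆ S, #T ≤ t → #T' ≤ t → ∑ a ∈ T, a = ∑ a ∈ T', a → T = T'

namespace IsSidonUpTo

variable {α : Type*} {t : ℕ} {S : Finset α} {x : α}

theorem empty [AddCommMonoid α] : IsSidonUpTo t (∅ : Finset α) := by
  intro T hT T' hT' _ _ _
  rw [subset_empty.mp hT, subset_empty.mp hT']

variable [AddCancelCommMonoid α] [DecidableEq α]

theorem insert_of_add_sum_ne (hS : IsSidonUpTo t S)
    (hx : ∀ A ⊆ S, ∀ B ⊆ S, #A ≤ t → #B ≤ t → x + ∑ a ∈ A, a ≠ ∑ b ∈ B, b) :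
    IsSidonUpTo t (insert x S) := by
  have mixed : ∀ T ⊆ insert x S, ∀ T' ⊆ insert x S, #T ≤ t → #T' ≤ t →
      ∑ a ∈ T, a = ∑ a ∈ T', a → x ∈ T → x ∉ T' → False := by
    intro T hT T' hT' hTt hT't hsum hxT hxT'
    refine hx (T.erase x) ((erase_subset_erase x hT).trans (erase_insert_subset x S))
      T' ((subset_insert_iff_of_notMem hxT').mp hT') ?_ hT't ?_
    · exact (card_erase_le).trans hTt
    · rw [add_sum_erase T (fun a => a) hxT, hsum]
  intro T hT T' hT' hTt hT't hsum
  by_cases hxT : x ∈ T <;> by_cases hxT' : x ∈ T'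
  · have herase : T.erase x = T'.erase x := by
      refine hS _ ((erase_subset_erase x hT).trans (erase_insert_subset x S))
        _ ((erase_subset_erase x hT').trans (erase_insert_subset x S))
        ((card_erase_le).trans hTt) ((card_erase_le).trans hT't) (add_left_cancel (a := x) ?_)
      rw [add_sum_erase T (fun a => a) hxT, add_sum_erase T' (fun a => a) hxT', hsum]
    rw [← insert_erase hxT, herase, insert_erase hxT']
  · exact (mixed T hT T' hT' hTt hT't hsum hxT hxT').elim
  · exact (mixed T' hT' T hT hT't hTt hsum.symm hxT' hxT).elim
  · exact hS T ((subset_insert_iff_of_notMem hxT).mp hT)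
      T' ((subset_insert_iff_of_notMem hxT').mp hT') hTt hT't hsum

end IsSidonUpTo

theorem exists_le_add_sum_ne_sum (S : Finset ℕ) (t : ℕ) :
    ∃ x ≤ (#S + 1) ^ (2 * t), ∀ A ⊆ S, ∀ B ⊆ S, #A ≤ t → #B ≤ t →
      x + ∑ a ∈ A, a ≠ ∑ b ∈ B, b := by
  set P := S.powerset.filter (#· ≤ t)
  set forbidden := (P ×ˢ P).image fun p => ∑ b ∈ p.2, b - ∑ a ∈ p.1, a
  have hcard : #forbidden < #(range ((#S + 1) ^ (2 * t) + 1)) :=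
    calc #forbidden ≤ #P * #P := card_image_le.trans (card_product P P).le
      _ ≤ (#S + 1) ^ t * (#S + 1) ^ t := by grw [card_filter_powerset_card_le_le]
      _ < #(range ((#S + 1) ^ (2 * t) + 1)) := by rw [card_range, ← pow_add, two_mul]; omega
  obtain ⟨x, hx, hxF⟩ := exists_mem_notMem_of_card_lt_card hcard
  refine ⟨x, Nat.lt_succ_iff.mp (mem_range.mp hx), fun A hA B hB hAt hBt heq => hxF ?_⟩
  refine mem_image.mpr ⟨(A, B), ?_, by simp only; omega⟩
  simp only [P, mem_product, mem_filter, mem_powerset]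
  exact ⟨⟨hA, hAt⟩, hB, hBt⟩

theorem exists_isSidonUpTo (t : ℕ) (ht : 0 < t) (m : ℕ) :
    ∃ S : Finset ℕ, #S = m ∧ (∀ a ∈ S, a ≤ m ^ (2 * t)) ∧ IsSidonUpTo t S := by
  induction m with
  | zero => exact ⟨∅, rfl, by simp, IsSidonUpTo.empty⟩
  | succ m ih =>
    obtain ⟨S, hcard, hbound, hS⟩ := ih
    obtain ⟨x, hxle, hx⟩ := exists_le_add_sum_ne_sum S t
    -- `x ∈ S` would give `x + ∑ ∅ = ∑ {x}`.
    have hxS : x ∉ S := fun hxS =>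
      hx ∅ (empty_subset S) {x} (singleton_subset_iff.mpr hxS) (by simp) (by simpa) (by simp)
    refine ⟨insert x S, by rw [card_insert_of_notMem hxS, hcard], ?_, hS.insert_of_add_sum_ne hx⟩
    intro a ha
    rcases mem_insert.mp ha with rfl | ha
    · rwa [hcard] at hxle
    · exact (hbound a ha).trans (Nat.pow_le_pow_left m.le_succ _)

theorem stmt10 : ∃ C : ℕ, ∀ n t : ℕ, 0 < n → 0 < t →
    ∃ S : Finset ℕ, S.card = n ^ 2 ∧ (∀ a ∈ S, a ≤ n ^ (C * t)) ∧
      ∀ T T' : Finset ℕ, T ⊆ S → T' ⊆ S → T.card = t → T'.card = t →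
        T.sum id = T'.sum id → T = T' := by
  refine ⟨4, fun n t _ ht => ?_⟩
  obtain ⟨S, hcard, hbound, hS⟩ := exists_isSidonUpTo t ht (n ^ 2)
  refine ⟨S, hcard, fun a ha => ?_, fun T T' hT hT' hTt hT't hsum => ?_⟩
  · calc a ≤ (n ^ 2) ^ (2 * t) := hbound a ha
      _ = n ^ (4 * t) := by ring
  · exact hS T hT T' hT' hTt.le hT't.le hsum
end

section
/- Let $\F$ be a field, $\E$ an extension of $\F$, and let $A \in \E^{n \times n}$ satisfy $A = P_1 P_2 \cdots P_d$ where the total number of non-zero entries among $P_1, \ldots, P_d$ is at most $s$. Then for every $t \le n^2/4$ with $s \ge dt$, the $\F$-dimension of the span of all products of $t$ distinct entries of $A$ is at most $\binom{s + dt}{dt} \le (e^d (2s/(dt))^d)^t$. -/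
open Matrix
open scoped Nat

noncomputable def chainProd {E : Type*} [Semiring E] :
    (d : ℕ) → (dims : Fin (d + 1) → ℕ) →
    ((i : Fin d) → Matrix (Fin (dims i.castSucc)) (Fin (dims i.succ)) E) →
    Matrix (Fin (dims ⟨0, Nat.succ_pos d⟩)) (Fin (dims (Fin.last d))) E
  | 0, _, _ => Matrix.of fun i j => if (i : ℕ) = (j : ℕ) then 1 else 0
  | d + 1, dims, P =>
      P ⟨0, Nat.succ_pos d⟩ * chainProd d (fun i => dims i.succ) (fun i => P i.succ)

/-- products of exactly `k` elements of `V` (with repetition) -/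
def prodSet {E : Type*} [CommMonoid E] (V : Set E) (k : ℕ) : Set E :=
  {x | ∃ l : List E, l.length = k ∧ (∀ v ∈ l, v ∈ V) ∧ x = l.prod}

lemma one_mem_prodSet {E : Type*} [CommMonoid E] (V : Set E) : (1 : E) ∈ prodSet V 0 :=
  ⟨[], rfl, by simp, by simp⟩

lemma mul_mem_prodSet {E : Type*} [CommMonoid E] {V : Set E} {a b : ℕ} {x y : E}
    (hx : x ∈ prodSet V a) (hy : y ∈ prodSet V b) : x * y ∈ prodSet V (a + b) := by
  obtain ⟨l, hl, hlm, rfl⟩ := hx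
  obtain ⟨l', hl', hlm', rfl⟩ := hy
  refine ⟨l ++ l', by simp [hl, hl'], ?_, by simp⟩
  intro v hv
  rcases List.mem_append.1 hv with h | h
  · exact hlm v h
  · exact hlm' v h

lemma mem_span_prodSet_mul {F E : Type*} [Field F] [CommRing E] [Algebra F E]
    {V : Set E} {a b : ℕ} {x y : E}
    (hx : x ∈ Submodule.span F (prodSet V a)) (hy : y ∈ Submodule.span F (prodSet V b)) :
    x * y ∈ Submodule.span F (prodSet V (a + b)) := by
  have h := Submodule.mul_mem_mul hx hy
  rw [Submodule.span_mul_span] at h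
  refine Submodule.span_le.2 ?_ h
  rintro z ⟨u, hu, v, hv, rfl⟩
  exact Submodule.subset_span (mul_mem_prodSet hu hv)

lemma prodSet_subset_range {E : Type*} [CommMonoid E] (Vf : Finset E) (k : ℕ) :
    prodSet (↑Vf : Set E) k ⊆
      Set.range (fun m : Sym {x // x ∈ Vf} k => (m.1.map Subtype.val).prod) := by
  rintro x ⟨l, hl, hmem, rfl⟩
  refine ⟨⟨(↑(l.pmap (fun x h => (⟨x, h⟩ : {x // x ∈ Vf})) hmem) : Multiset _), by simp [hl]⟩, ?_⟩
  simp [List.map_pmap, List.pmap_eq_map]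

lemma chainProd_entry_mem (F : Type*) {E : Type*} [Field F] [CommRing E] [Algebra F E] (V : Set E) :
    ∀ (d : ℕ) (dims : Fin (d + 1) → ℕ)
      (P : (i : Fin d) → Matrix (Fin (dims i.castSucc)) (Fin (dims i.succ)) E),
      (∀ (i : Fin d) a b, P i a b ∈ V) → ∀ i j,
      chainProd d dims P i j ∈ Submodule.span F (prodSet V d)
  | 0, dims, P, hV, i, j => by
      simp only [chainProd, Matrix.of_apply]
      by_cases h : (i : ℕ) = (j : ℕ)
      · simpa [h] using Submodule.subset_span (one_mem_prodSet V)
      · simp [h]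
  | d + 1, dims, P, hV, i, j => by
      simp only [chainProd, Matrix.mul_apply]
      refine Submodule.sum_mem _ fun k _ => ?_
      have h1 : P ⟨0, Nat.succ_pos d⟩ i k ∈ Submodule.span F (prodSet V 1) :=
        Submodule.subset_span ⟨[P ⟨0, Nat.succ_pos d⟩ i k], rfl,
          by simpa using hV ⟨0, Nat.succ_pos d⟩ i k, by simp⟩
      have h2 := chainProd_entry_mem F V d (fun i => dims i.succ) (fun i => P i.succ)
        (fun i a b => hV i.succ a b) k j
      simpa [add_comm] using mem_span_prodSet_mul h1 h2

lemma prod_mem_span {F E : Type*} [Field F] [CommRing E] [Algebra F E]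
    {V : Set E} {d : ℕ} {ι : Type*} [DecidableEq ι] (f : ι → E) (T : Finset ι)
    (hT : ∀ p ∈ T, f p ∈ Submodule.span F (prodSet V d)) :
    (∏ p ∈ T, f p) ∈ Submodule.span F (prodSet V (d * T.card)) := by
  induction T using Finset.cons_induction with
  | empty => simpa using Submodule.subset_span (one_mem_prodSet V)
  | cons a T ha ih =>
      rw [Finset.prod_cons, Finset.card_cons, Nat.mul_succ, add_comm]
      exact mem_span_prodSet_mul (hT a (Finset.mem_cons_self a T))
        (ih fun p hp => hT p (Finset.mem_cons_of_mem hp))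

lemma real_choose_bound (d t s : ℕ) (hd : 0 < d) (ht : 0 < t) (hst : d * t ≤ s) :
    ((s + d * t).choose (d * t) : ℝ) ≤ (Real.exp 1 ^ d * (2 * s / (d * t)) ^ d) ^ t := by
  set m := d * t with hm
  have hm0 : 0 < m := Nat.mul_pos hd ht
  have hmR : (0 : ℝ) < m := by exact_mod_cast hm0
  have hfac : (0 : ℝ) < (m ! : ℝ) := by exact_mod_cast m.factorial_pos
  have key : ((m : ℝ)) ^ m / m ! ≤ Real.exp 1 ^ m := by
    have h2 : ((m : ℝ)) ^ m / m ! ≤ ∑ i ∈ Finset.range (m + 1), (m : ℝ) ^ i / i ! :=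
      Finset.single_le_sum (f := fun i => (m : ℝ) ^ i / i !)
        (fun i _ => by positivity) (Finset.self_mem_range_succ m)
    have h3 := Real.sum_le_exp_of_nonneg (x := (m : ℝ)) (by positivity) (m + 1)
    have h4 : Real.exp (m : ℝ) = Real.exp 1 ^ m := by
      rw [← Real.exp_nat_mul, mul_one]
    linarith
  have hkey' : ((m : ℝ)) ^ m ≤ Real.exp 1 ^ m * m ! := by
    rw [div_le_iff₀ hfac] at key; linarith
  have h1 : (((s + m).choose m : ℕ) : ℝ) ≤ ((s + m : ℕ) : ℝ) ^ m / m ! :=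
    Nat.choose_le_pow_div m (s + m)
  have h2 : ((s + m : ℕ) : ℝ) ^ m ≤ (2 * s : ℝ) ^ m := by
    apply pow_le_pow_left₀ (by positivity)
    push_cast
    have : (m : ℝ) ≤ s := by exact_mod_cast hst
    linarith
  have hRHS : (Real.exp 1 ^ d * (2 * s / (d * t)) ^ d) ^ t
      = Real.exp 1 ^ m * (2 * s : ℝ) ^ m / (m : ℝ) ^ m := by
    have hdt : ((d : ℝ) * t) = (m : ℝ) := by push_cast [hm]; ring
    rw [hdt, div_pow, mul_div_assoc, ← div_pow, ← mul_pow, ← pow_mul, ← hm,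
      mul_pow, ← mul_div_assoc, div_pow]
    ring
  rw [hRHS]
  have h3 : (2 * s : ℝ) ^ m / m ! ≤ Real.exp 1 ^ m * (2 * s : ℝ) ^ m / (m : ℝ) ^ m := by
    rw [div_le_div_iff₀ hfac (pow_pos hmR m)]
    have ha : (0 : ℝ) ≤ (2 * s : ℝ) ^ m := by positivity
    calc (2 * s : ℝ) ^ m * (m : ℝ) ^ m ≤ (2 * s : ℝ) ^ m * (Real.exp 1 ^ m * m !) :=
          mul_le_mul_of_nonneg_left hkey' ha
      _ = Real.exp 1 ^ m * (2 * s : ℝ) ^ m * m ! := by ring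
  calc (((s + m).choose m : ℕ) : ℝ) ≤ ((s + m : ℕ) : ℝ) ^ m / m ! := h1
    _ ≤ (2 * s : ℝ) ^ m / m ! := by gcongr
    _ ≤ _ := h3

theorem stmt13 {F E : Type*} [Field F] [Field E] [Algebra F E]
    (n d t s : ℕ) (hd : 0 < d) (ht : 0 < t)
    (dims : Fin (d + 1) → ℕ)
    (h0 : dims ⟨0, Nat.succ_pos d⟩ = n) (hlast : dims (Fin.last d) = n)
    (P : (i : Fin d) → Matrix (Fin (dims i.castSucc)) (Fin (dims i.succ)) E)
    (A : Matrix (Fin n) (Fin n) E)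
    (hA : ∀ i j, A i j = chainProd d dims P (Fin.cast h0.symm i) (Fin.cast hlast.symm j))
    (hs : ∑ i, Set.ncard {p : Fin (dims i.castSucc) × Fin (dims i.succ) | P i p.1 p.2 ≠ 0} ≤ s)
    (ht4 : 4 * t ≤ n ^ 2) (hst : d * t ≤ s) :
    Module.rank F ↥(Submodule.span F
      {x : E | ∃ T : Finset (Fin n × Fin n), T.card = t ∧ x = ∏ p ∈ T, A p.1 p.2}) ≤
      (Nat.choose (s + d * t) (d * t) : Cardinal) ∧
    (Nat.choose (s + d * t) (d * t) : ℝ) ≤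
      (Real.exp 1 ^ d * (2 * s / (d * t)) ^ d) ^ t := by
  classical
  refine ⟨?_, real_choose_bound d t s hd ht hst⟩
  set m := d * t with hm
  let Vf : Finset E := insert 0 (Finset.univ.biUnion fun i : Fin d =>
    (Finset.univ.filter fun p : Fin (dims i.castSucc) × Fin (dims i.succ) =>
      P i p.1 p.2 ≠ 0).image fun p => P i p.1 p.2)
  have hVcard : Vf.card ≤ s + 1 := by
    have h1 : Vf.card ≤ 1 + ∑ i : Fin d,
        ((Finset.univ.filter fun p : Fin (dims i.castSucc) × Fin (dims i.succ) =>
          P i p.1 p.2 ≠ 0).image fun p => P i p.1 p.2).card := by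
      refine (Finset.card_insert_le _ _).trans ?_
      have := Finset.card_biUnion_le (s := (Finset.univ : Finset (Fin d)))
        (t := fun i => (Finset.univ.filter fun p : Fin (dims i.castSucc) × Fin (dims i.succ) =>
          P i p.1 p.2 ≠ 0).image fun p => P i p.1 p.2)
      omega
    have h2 : ∀ i : Fin d,
        ((Finset.univ.filter fun p : Fin (dims i.castSucc) × Fin (dims i.succ) =>
          P i p.1 p.2 ≠ 0).image fun p => P i p.1 p.2).card ≤
        Set.ncard {p : Fin (dims i.castSucc) × Fin (dims i.succ) | P i p.1 p.2 ≠ 0} := by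
      intro i
      refine (Finset.card_image_le).trans_eq ?_
      rw [Set.ncard_eq_toFinset_card']
      congr 1
      simp [Set.toFinset_setOf]
    have h3 := (Finset.sum_le_sum fun i _ => h2 i).trans hs
    omega
  have hVmem : ∀ (i : Fin d) a b, P i a b ∈ (↑Vf : Set E) := by
    intro i a b
    by_cases h : P i a b = 0
    · simp [Vf, h]
    · refine Finset.mem_coe.2 (Finset.mem_insert_of_mem (Finset.mem_biUnion.2 ⟨i,
        Finset.mem_univ i, Finset.mem_image.2 ⟨(a, b), by simp [h], rfl⟩⟩))
  have hsub : {x : E | ∃ T : Finset (Fin n × Fin n), T.card = t ∧ x = ∏ p ∈ T, A p.1 p.2}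
      ⊆ ↑(Submodule.span F (prodSet (↑Vf : Set E) m)) := by
    rintro x ⟨T, hTcard, rfl⟩
    have := prod_mem_span (F := F) (V := (↑Vf : Set E)) (d := d)
      (fun p : Fin n × Fin n => A p.1 p.2) T
      (fun p _ => by show A p.1 p.2 ∈ _; rw [hA]; exact chainProd_entry_mem F (↑Vf : Set E) d dims P hVmem _ _)
    rwa [hTcard] at this
  have hrank1 : Module.rank F ↥(Submodule.span F
      {x : E | ∃ T : Finset (Fin n × Fin n), T.card = t ∧ x = ∏ p ∈ T, A p.1 p.2}) ≤
      Module.rank F ↥(Submodule.span F (prodSet (↑Vf : Set E) m)) :=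
    Submodule.rank_mono (Submodule.span_le.2 hsub)
  have hrank2 : Module.rank F ↥(Submodule.span F (prodSet (↑Vf : Set E) m)) ≤
      Cardinal.mk (prodSet (↑Vf : Set E) m) := rank_span_le (R := F) _
  have hcard : Cardinal.mk (prodSet (↑Vf : Set E) m) ≤
      ((Nat.choose (s + m) m : ℕ) : Cardinal) := by
    refine ((Cardinal.mk_le_mk_of_subset (prodSet_subset_range Vf m)).trans
      Cardinal.mk_range_le).trans ?_
    rw [Cardinal.mk_fintype]
    have := Sym.card_sym_eq_choose (α := {x // x ∈ Vf}) m
    rw [this, Fintype.card_coe]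
    exact_mod_cast Nat.cast_le.2 (Nat.choose_le_choose m (by omega))
  exact (hrank1.trans hrank2).trans hcard
end

section
/- Let $\alpha$ be a root of an irreducible polynomial of degree $D+1$ over $\F_p$ in the extension $\E = \F_p[z]/(g)$, and let $G \in \F_p[y]^{n\times n}$ have monomial entries $G_{i,j} = y^{e_{i,j}}$ with all $t$-wise sums of the exponents distinct and at most $D$. Let $M \in \E^{n\times n}$ be obtained by substituting $y = \alpha$. Then $\Gamma_{t,\F_p}(M) = \binom{n^2}{t}$. -/
/-!
Each product of `t` distinct entries of `M` is `α ^ s`, where `s` is the sum of the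
corresponding exponents. The hypotheses make these sums pairwise distinct and smaller than
`deg g`, so the products are distinct members of the power basis `1, α, …, α ^ D` of
`AdjoinRoot g`; hence they are linearly independent and span a space whose dimension is the
number of `t`-subsets of the `n ^ 2` positions.
-/

open Polynomial

lemma AdjoinRoot.linearIndependent_root_pow {K ι : Type*} [Field K] {g : K[X]} (hg : g ≠ 0)
    {f : ι → ℕ} (hf : Function.Injective f) (hlt : ∀ i, f i < g.natDegree) :
    LinearIndependent K (fun i => root g ^ f i) := by
  let pb := powerBasis hg
  let f' : ι → Fin pb.dim := fun i => ⟨f i, hlt i⟩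
  have hf' : Function.Injective f' := fun i j h => hf (congrArg Fin.val h)
  have hbasis : (fun i => root g ^ f i) = pb.basis ∘ f' :=
    funext fun i => by simp [pb, f']
  rw [hbasis]
  exact pb.basis.linearIndependent.comp f' hf'

lemma Cardinal.mk_finset_card_eq (α : Type*) [Fintype α] (k : ℕ) :
    Cardinal.mk {s : Finset α // s.card = k} = (Fintype.card α).choose k := by
  rw [mk_fintype, Fintype.card_finset_len]

theorem stmt15_general (p : ℕ) [Fact p.Prime] (D n t : ℕ)
    (g : Polynomial (ZMod p)) (hdeg : g.natDegree = D + 1)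
    (e : Fin n × Fin n → ℕ)
    (hsidon : ∀ T T' : Finset (Fin n × Fin n), T.card = t → T'.card = t →
      (∑ q ∈ T, e q) = (∑ q ∈ T', e q) → T = T')
    (hbound : ∀ T : Finset (Fin n × Fin n), T.card = t → (∑ q ∈ T, e q) ≤ D)
    (M : Matrix (Fin n) (Fin n) (AdjoinRoot g))
    (hM : ∀ i j, M i j = AdjoinRoot.root g ^ e (i, j)) :
    Module.rank (ZMod p) ↥(Submodule.span (ZMod p)
      {x : AdjoinRoot g | ∃ T : Finset (Fin n × Fin n), T.card = t ∧
        x = ∏ q ∈ T, M q.1 q.2}) = (Nat.choose (n ^ 2) t : Cardinal) := by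
  have hg : g ≠ 0 := fun h => by simp [h] at hdeg
  let s : {T : Finset (Fin n × Fin n) // T.card = t} → ℕ := fun T => ∑ q ∈ T.1, e q
  have hprod (T : Finset (Fin n × Fin n)) :
      ∏ q ∈ T, M q.1 q.2 = AdjoinRoot.root g ^ ∑ q ∈ T, e q := by
    simp only [hM, Finset.prod_pow_eq_pow_sum]
  have hset : {x : AdjoinRoot g | ∃ T : Finset (Fin n × Fin n), T.card = t ∧
      x = ∏ q ∈ T, M q.1 q.2} = Set.range (fun T => AdjoinRoot.root g ^ s T) := by
    ext x
    simp [s, hprod, eq_comm]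
  have hli : LinearIndependent (ZMod p) (fun T => AdjoinRoot.root g ^ s T) :=
    AdjoinRoot.linearIndependent_root_pow hg
      (fun T T' h => Subtype.ext (hsidon T.1 T'.1 T.2 T'.2 h))
      (fun T => hdeg ▸ Nat.lt_succ_of_le (hbound T.1 T.2))
  rw [hset, rank_span hli, Cardinal.mk_range_eq _ hli.injective,
    Cardinal.mk_finset_card_eq, Fintype.card_prod, Fintype.card_fin, sq]

theorem stmt15 (p : ℕ) [Fact p.Prime] (D n t : ℕ) (ht : 0 < t)
    (g : Polynomial (ZMod p)) (hg : Irreducible g) (hdeg : g.natDegree = D + 1)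
    (e : Fin n × Fin n → ℕ)
    (hsidon : ∀ T T' : Finset (Fin n × Fin n), T.card = t → T'.card = t →
      (∑ q ∈ T, e q) = (∑ q ∈ T', e q) → T = T')
    (hbound : ∀ T : Finset (Fin n × Fin n), T.card = t → (∑ q ∈ T, e q) ≤ D)
    (M : Matrix (Fin n) (Fin n) (AdjoinRoot g))
    (hM : ∀ i j, M i j = AdjoinRoot.root g ^ e (i, j)) :
    Module.rank (ZMod p) ↥(Submodule.span (ZMod p)
      {x : AdjoinRoot g | ∃ T : Finset (Fin n × Fin n), T.card = t ∧
        x = ∏ q ∈ T, M q.1 q.2}) = (Nat.choose (n ^ 2) t : Cardinal) :=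
  stmt15_general p D n t g hdeg e hsidon hbound M hM
end
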